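/- arXiv:1503.02893 — 2 statements merged into one kernel-verified Lean document; each statement's English description precedes it below -/
import Mathlib

section
/- There exists a universal constant C > 0 such that for every N ≥ 2 the following holds: if g ∈ ℂ^{2N-1} is a random vector whose real and imaginary parts have i.i.d. real Gaussian entries with mean 0 and variance 1, then E[‖G g‖₂] ≤ C ln N, where ‖G g‖₂ is the spectral norm of G g. -/
open MeasureTheory ProbabilityTheory Matrix

noncomputable section

/-- `K_j = min (j+1) (2N-1-j)`: equals `j+1` for `j ≤ N-1` and `2N-1-j` for `j ≥ N-1`. -/
def Kval (N j : ℕ) : ℕ := min (j + 1) (2 * N - 1 - j)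

/-- The Hankel matrix `H(x)` with `[H(x)]_{jk} = x_{j+k}`. -/
def hankelMat {N : ℕ} (x : Fin (2 * N - 1) → ℂ) : Matrix (Fin N) (Fin N) ℂ :=
  fun j k => x ⟨j.1 + k.1, by have := j.2; have := k.2; omega⟩

/-- The Toeplitz matrix `T(x)` with `[T(x)]_{ij} = x_{N-1+(i-j)}`. -/
def toeplitzMat {N : ℕ} (x : Fin (2 * N - 1) → ℂ) : Matrix (Fin N) (Fin N) ℂ :=
  fun i j => x ⟨N - 1 + i.1 - j.1, by have := i.2; have := j.2; omega⟩

/-- The linear map `G` with `(G x)_{kl} = x_{k+l} / √K_{k+l}`. -/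
def Gmap {N : ℕ} (x : Fin (2 * N - 1) → ℂ) : Matrix (Fin N) (Fin N) ℂ :=
  fun j k => x ⟨j.1 + k.1, by have := j.2; have := k.2; omega⟩ /
    (Real.sqrt (Kval N (j.1 + k.1)) : ℂ)

/-- The real version of the map `G`. -/
def GmapR {N : ℕ} (x : Fin (2 * N - 1) → ℝ) : Matrix (Fin N) (Fin N) ℝ :=
  fun j k => x ⟨j.1 + k.1, by have := j.2; have := k.2; omega⟩ /
    Real.sqrt (Kval N (j.1 + k.1))

/-- The singular values of a square matrix: square roots of eigenvalues of `Xᴴ * X`. -/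
def singvals {𝕜 : Type*} [RCLike 𝕜] {n : Type*} [Fintype n] [DecidableEq n]
    (X : Matrix n n 𝕜) : n → ℝ :=
  fun i => Real.sqrt ((Matrix.isHermitian_conjTranspose_mul_self X).eigenvalues i)

/-- The nuclear norm: the sum of the singular values. -/
def nucNorm {𝕜 : Type*} [RCLike 𝕜] {n : Type*} [Fintype n] [DecidableEq n]
    (X : Matrix n n 𝕜) : ℝ :=
  ∑ i, singvals X i

/-- The spectral norm: the largest singular value. -/
def specNorm {𝕜 : Type*} [RCLike 𝕜] {n : Type*} [Fintype n] [DecidableEq n]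
    (X : Matrix n n 𝕜) : ℝ :=
  ⨆ i, singvals X i

/-- The Frobenius norm of a complex matrix. -/
def frobNorm {m n : Type*} [Fintype m] [Fintype n] (X : Matrix m n ℂ) : ℝ :=
  Real.sqrt (∑ i, ∑ j, ‖X i j‖ ^ 2)

/-- Euclidean norm of a complex vector. -/
def cl2 {n : Type*} [Fintype n] (v : n → ℂ) : ℝ := Real.sqrt (∑ i, ‖v i‖ ^ 2)

/-- Euclidean norm of a real vector. -/
def rl2 {n : Type*} [Fintype n] (v : n → ℝ) : ℝ := Real.sqrt (∑ i, (v i) ^ 2)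

/-- The diagonal weight matrix `D` with diagonal entries `√K_j`. -/
def Dmat (N : ℕ) : Matrix (Fin (2 * N - 1)) (Fin (2 * N - 1)) ℂ :=
  Matrix.diagonal fun j => (Real.sqrt (Kval N j.1) : ℂ)

/-- `B : Ω → ℂ^{M×n}` is a complex standard Gaussian random matrix: the real and imaginary
parts of its entries are i.i.d. real Gaussian random variables with mean 0 and variance 1. -/
def IsStdComplexGaussianMatrix {Ω : Type*} [MeasurableSpace Ω] (μ : Measure Ω)
    {m n : ℕ} (B : Ω → Matrix (Fin m) (Fin n) ℂ) : Prop :=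
  ∃ f : Fin m × Fin n × Bool → Ω → ℝ,
    (∀ p, Measurable (f p)) ∧
    iIndepFun f μ ∧
    (∀ p, μ.map (f p) = gaussianReal 0 1) ∧
    ∀ ω i j, B ω i j = ⟨f (i, j, true) ω, f (i, j, false) ω⟩

/-- The descent cone of `y ↦ ‖G y‖_*` at `yhat`. -/
def descentCone {N : ℕ} (yhat : Fin (2 * N - 1) → ℂ) : Set (Fin (2 * N - 1) → ℂ) :=
  {v | ∃ (lam : ℝ) (z : Fin (2 * N - 1) → ℂ),
    0 ≤ lam ∧ nucNorm (Gmap (yhat + z)) ≤ nucNorm (Gmap yhat) ∧ v = lam • z}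

/-- Identify `ℝ^{4N-2}` (as `Fin (2N-1) ⊕ Fin (2N-1) → ℝ`) with `ℂ^{2N-1}`:
`γ = (α, β) ↦ α + iβ`. -/
def toComplexVec {N : ℕ} (γ : Fin (2 * N - 1) ⊕ Fin (2 * N - 1) → ℝ) : Fin (2 * N - 1) → ℂ :=
  fun j => ⟨γ (Sum.inl j), γ (Sum.inr j)⟩

/-- The real embedding in `ℝ^{4N-2}` of a set of vectors in `ℂ^{2N-1}`. -/
def realEmbed {N : ℕ} (T : Set (Fin (2 * N - 1) → ℂ)) :
    Set (Fin (2 * N - 1) ⊕ Fin (2 * N - 1) → ℝ) :=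
  {γ | toComplexVec γ ∈ T}

/-- The polar cone of a set in `ι → ℝ`. -/
def polarCone {ι : Type*} [Fintype ι] (T : Set (ι → ℝ)) : Set (ι → ℝ) :=
  {d | ∀ γ ∈ T, ∑ i, γ i * d i ≤ 0}

/-- The Gaussian width of a set `S ⊆ ι → ℝ`: `E[sup_{γ ∈ S} ⟨γ, ξ⟩]` for a standard
Gaussian vector `ξ`. -/
def gaussWidth {ι : Type*} [Fintype ι] (S : Set (ι → ℝ)) : ℝ :=
  ∫ ξ, sSup ((fun γ => ∑ i, γ i * ξ i) '' S)
    ∂(Measure.pi fun _ : ι => gaussianReal 0 1)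

/-- `λ_n = √2 Γ((n+1)/2) / Γ(n/2)`, the expected length of an `n`-dimensional standard
Gaussian vector. -/
def lamGamma (n : ℕ) : ℝ := Real.sqrt 2 * Real.Gamma ((n + 1) / 2) / Real.Gamma (n / 2)

/-!
Write `M = 2N - 1` and `y = x / √K`, so that `G x` is the Hankel matrix `y (k + l)`. Since
`k + l < M`, the sum `k + l` may be read in `ℤ/M`; expanding `y` in characters of `ℤ/M`,
Cauchy–Schwarz and Parseval give `‖G x‖₂ ≤ max_ψ |ŷ ψ|`. Bounding `|z| ≤ 2 max_k Re (iᵏ z)`,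
for Gaussian `x` this is twice the maximum of `4M` centred Gaussian linear forms, each of
variance `∑ⱼ 1/Kⱼ ≤ 2 (1 + log M)`. The maximum of `n` such forms of variance at most `s` has
mean at most `log n + s / 2` (Jensen for `exp`), and here `n = 4M`.
-/

open Finset Real

section GaussianMaximal

variable {ι : Type*} [Fintype ι]

lemma integral_exp_mul_gaussianReal (t : ℝ) :
    ∫ x, exp (t * x) ∂gaussianReal 0 1 = exp (t ^ 2 / 2) := by
  simpa [mgf] using congrFun (mgf_id_gaussianReal (μ := 0) (v := 1)) t

lemma integrable_exp_linear_gaussianPi (c : ι → ℝ) :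
    Integrable (fun ξ : ι → ℝ => exp (∑ i, c i * ξ i))
      (Measure.pi fun _ => gaussianReal 0 1) := by
  simp_rw [exp_sum]
  exact Integrable.fintype_prod fun i => integrable_exp_mul_gaussianReal (c i)

lemma integral_exp_linear_gaussianPi (c : ι → ℝ) :
    ∫ ξ, exp (∑ i, c i * ξ i) ∂(Measure.pi fun _ : ι => gaussianReal 0 1) =
      exp (∑ i, c i ^ 2 / 2) := by
  simp_rw [exp_sum]
  rw [integral_fintype_prod_eq_prod (f := fun i x => exp (c i * x))]
  exact prod_congr rfl fun i _ => integral_exp_mul_gaussianReal (c i)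

lemma integrable_linear_gaussianPi (c : ι → ℝ) :
    Integrable (fun ξ : ι → ℝ => ∑ i, c i * ξ i) (Measure.pi fun _ => gaussianReal 0 1) :=
  integrable_finsetSum _ fun i _ =>
    (integrable_eval ((memLp_id_gaussianReal 1).integrable le_rfl)).const_mul (c i)

variable {κ : Type*} [Fintype κ] [Nonempty κ]

lemma integrable_sup'_linear_gaussianPi (c : κ → ι → ℝ) :
    Integrable (fun ξ : ι → ℝ => univ.sup' univ_nonempty fun q => ∑ i, c q i * ξ i)
      (Measure.pi fun _ => gaussianReal 0 1) := by
  have := univ.sup'_induction univ_nonempty (fun q ξ => ∑ i, c q i * ξ i)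
    (p := fun f => Integrable f (Measure.pi fun _ => gaussianReal 0 1))
    (fun _ hf _ hg => hf.sup hg) fun q _ => integrable_linear_gaussianPi (c q)
  convert this using 1
  ext ξ
  rw [Finset.sup'_apply]

theorem integral_sup'_linear_gaussianPi_le (c : κ → ι → ℝ) {s : ℝ}
    (hs : ∀ q, ∑ i, c q i ^ 2 ≤ s) :
    ∫ ξ, (univ.sup' univ_nonempty fun q => ∑ i, c q i * ξ i)
        ∂(Measure.pi fun _ : ι => gaussianReal 0 1) ≤ log (Fintype.card κ) + s / 2 := by
  set μ := Measure.pi fun _ : ι => gaussianReal 0 1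
  set F := fun ξ : ι → ℝ => univ.sup' univ_nonempty fun q => ∑ i, c q i * ξ i
  have hF : Integrable F μ := integrable_sup'_linear_gaussianPi c
  have hsum : Integrable (fun ξ => ∑ q, exp (∑ i, c q i * ξ i)) μ :=
    integrable_finsetSum _ fun q _ => integrable_exp_linear_gaussianPi (c q)
  have hexp_le : ∀ ξ, exp (F ξ) ≤ ∑ q, exp (∑ i, c q i * ξ i) := fun ξ => by
    obtain ⟨q, -, hq⟩ := exists_mem_eq_sup' univ_nonempty fun q => ∑ i, c q i * ξ i
    rw [show F ξ = _ from hq]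
    exact single_le_sum (f := fun q => exp (∑ i, c q i * ξ i)) (fun q _ => (exp_pos _).le)
      (mem_univ q)
  have hexpF : Integrable (exp ∘ F) μ :=
    hsum.mono' (continuous_exp.comp_aestronglyMeasurable hF.aestronglyMeasurable)
      (ae_of_all _ fun ξ => by simpa [abs_of_pos (exp_pos _)] using hexp_le ξ)
  have hcard : (0 : ℝ) < Fintype.card κ := by exact_mod_cast Fintype.card_pos
  rw [← exp_le_exp, exp_add, exp_log hcard]
  calc exp (∫ ξ, F ξ ∂μ) ≤ ∫ ξ, exp (F ξ) ∂μ :=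
        convexOn_exp.map_integral_le continuous_exp.continuousOn isClosed_univ
          (ae_of_all _ fun _ => Set.mem_univ _) hF hexpF
    _ ≤ ∫ ξ, ∑ q, exp (∑ i, c q i * ξ i) ∂μ := integral_mono hexpF hsum hexp_le
    _ = ∑ q, exp (∑ i, c q i ^ 2 / 2) := by
        rw [integral_finsetSum _ fun q _ => integrable_exp_linear_gaussianPi (c q)]
        exact sum_congr rfl fun q _ => integral_exp_linear_gaussianPi (c q)
    _ ≤ ∑ _q : κ, exp (s / 2) := sum_le_sum fun q _ => by
        rw [exp_le_exp, ← sum_div]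
        linarith [hs q]
    _ = Fintype.card κ * exp (s / 2) := by simp

end GaussianMaximal

section CharacterSums

variable {α β : Type*} [AddCommGroup α] [Fintype α] [DecidableEq α] [Fintype β]

lemma sum_addChar_mul_apply_neg (a b : α) :
    ∑ ψ : AddChar α ℂ, ψ a * ψ (-b) = if a = b then (Fintype.card α : ℂ) else 0 := by
  simp_rw [← AddChar.map_add_eq_mul, ← sub_eq_add_neg, AddChar.sum_apply_eq_ite, sub_eq_zero]

lemma eq_inv_card_mul_sum_addChar (y : α → ℂ) (a : α) :
    y a = (Fintype.card α : ℂ)⁻¹ * ∑ ψ : AddChar α ℂ, (∑ b, y b * ψ b) * ψ (-a) := by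
  simp_rw [sum_mul, mul_assoc]
  rw [sum_comm]
  simp_rw [← mul_sum, sum_addChar_mul_apply_neg, mul_ite, mul_zero, sum_ite_eq',
    if_pos (mem_univ a)]
  field_simp

lemma sum_norm_sq_sum_mul_addChar (e : β ↪ α) (u : β → ℂ) :
    ∑ ψ : AddChar α ℂ, ‖∑ k, u k * ψ (e k)‖ ^ 2 = Fintype.card α * ∑ k, ‖u k‖ ^ 2 := by
  classical
  apply Complex.ofReal_injective
  push_cast
  simp_rw [← Complex.mul_conj', map_sum, map_mul, ← AddChar.map_neg_eq_conj, sum_mul_sum]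
  calc ∑ ψ : AddChar α ℂ, ∑ k, ∑ l, u k * ψ (e k) * (starRingEnd ℂ (u l) * ψ (-e l))
      = ∑ k, ∑ l, u k * starRingEnd ℂ (u l) * ∑ ψ : AddChar α ℂ, ψ (e k) * ψ (-e l) := by
        rw [sum_comm]
        refine sum_congr rfl fun k _ => ?_
        rw [sum_comm]
        simp_rw [mul_sum]
        exact sum_congr rfl fun l _ => sum_congr rfl fun ψ _ => by ring
    _ = Fintype.card α * ∑ k, u k * starRingEnd ℂ (u k) := by
        simp only [sum_addChar_mul_apply_neg, EmbeddingLike.apply_eq_iff_eq, mul_ite, mul_zero,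
          sum_ite_eq, mem_univ, if_true, mul_sum]
        exact sum_congr rfl fun k _ => by ring

lemma sum_mul_apply_add_mul_eq (e : β ↪ α) (y : α → ℂ) (u v : β → ℂ) :
    ∑ k, ∑ l, u k * y (e k + e l) * v l = (Fintype.card α : ℂ)⁻¹ *
      ∑ ψ : AddChar α ℂ, (∑ a, y a * ψ a) *
        ((∑ k, u k * ψ (-e k)) * ∑ l, v l * ψ (-e l)) := by
  have hkl : ∀ k l, u k * y (e k + e l) * v l = (Fintype.card α : ℂ)⁻¹ *
      ∑ ψ : AddChar α ℂ, (∑ a, y a * ψ a) * ((u k * ψ (-e k)) * (v l * ψ (-e l))) := by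
    intro k l
    rw [eq_inv_card_mul_sum_addChar y (e k + e l), mul_sum, mul_sum, sum_mul, mul_sum]
    refine sum_congr rfl fun ψ _ => ?_
    rw [neg_add, AddChar.map_add_eq_mul]
    ring
  simp_rw [hkl, ← mul_sum (univ : Finset β)]
  congr 1
  simp_rw [sum_mul_sum (univ : Finset β) (univ : Finset β), mul_sum (univ : Finset β)]
  symm
  rw [sum_comm]
  refine sum_congr rfl fun k _ => ?_
  rw [sum_comm]

theorem norm_sum_mul_apply_add_mul_le (e : β ↪ α) (y : α → ℂ) {P : ℝ}
    (hP : ∀ ψ : AddChar α ℂ, ‖∑ a, y a * ψ a‖ ≤ P) (u v : β → ℂ) :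
    ‖∑ k, ∑ l, u k * y (e k + e l) * v l‖ ≤ P * cl2 u * cl2 v := by
  set A := fun ψ : AddChar α ℂ => ∑ k, u k * ψ (-e k)
  set B := fun ψ : AddChar α ℂ => ∑ l, v l * ψ (-e l)
  have hn : (0 : ℝ) < Fintype.card α := Nat.cast_pos.mpr Fintype.card_pos
  have hP0 : 0 ≤ P := (norm_nonneg _).trans (hP 0)
  have hA : ∑ ψ, ‖A ψ‖ ^ 2 = Fintype.card α * ∑ k, ‖u k‖ ^ 2 :=
    sum_norm_sq_sum_mul_addChar (e.trans (Equiv.neg α).toEmbedding) u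
  have hB : ∑ ψ, ‖B ψ‖ ^ 2 = Fintype.card α * ∑ l, ‖v l‖ ^ 2 :=
    sum_norm_sq_sum_mul_addChar (e.trans (Equiv.neg α).toEmbedding) v
  rw [sum_mul_apply_add_mul_eq, norm_mul, norm_inv, Complex.norm_natCast]
  calc (Fintype.card α : ℝ)⁻¹ * ‖∑ ψ, (∑ a, y a * ψ a) * (A ψ * B ψ)‖
      ≤ (Fintype.card α : ℝ)⁻¹ * (P * ∑ ψ, ‖A ψ‖ * ‖B ψ‖) := by
        gcongr
        refine (norm_sum_le _ _).trans ?_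
        rw [mul_sum]
        gcongr with ψ
        rw [norm_mul, norm_mul]
        gcongr
        exact hP ψ
    _ ≤ (Fintype.card α : ℝ)⁻¹ * (P * (√(∑ ψ, ‖A ψ‖ ^ 2) * √(∑ ψ, ‖B ψ‖ ^ 2))) := by
        gcongr
        exact Real.sum_mul_le_sqrt_mul_sqrt _ _ _
    _ = P * cl2 u * cl2 v := by
        rw [hA, hB, Real.sqrt_mul hn.le, Real.sqrt_mul hn.le, cl2, cl2]
        field_simp
        rw [Real.sq_sqrt hn.le]
        ring

end CharacterSums

section SpectralNorm

variable {n : Type*} [Fintype n]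

lemma cl2_nonneg (v : n → ℂ) : 0 ≤ cl2 v := Real.sqrt_nonneg _

lemma cl2_star (v : n → ℂ) : cl2 (star v) = cl2 v := by
  simp [cl2]

lemma cl2_euclideanSpace (v : EuclideanSpace ℂ n) : cl2 v = ‖v‖ :=
  (EuclideanSpace.norm_eq v).symm

lemma star_dotProduct_self_eq_cl2_sq (w : n → ℂ) : star w ⬝ᵥ w = ((cl2 w ^ 2 : ℝ) : ℂ) := by
  rw [cl2, Real.sq_sqrt (by positivity), dotProduct]
  push_cast
  simp_rw [Pi.star_apply, mul_comm (star _), RCLike.star_def, Complex.mul_conj']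

lemma cl2_mulVec_le_of_norm_sum_le (X : Matrix n n ℂ) {P : ℝ} (hP : 0 ≤ P)
    (h : ∀ u v : n → ℂ, ‖∑ k, ∑ l, u k * X k l * v l‖ ≤ P * cl2 u * cl2 v) (v : n → ℂ) :
    cl2 (X *ᵥ v) ≤ P * cl2 v := by
  set w := X *ᵥ v
  have hw : ∑ k, ∑ l, star w k * X k l * v l = ((cl2 w ^ 2 : ℝ) : ℂ) := by
    rw [← star_dotProduct_self_eq_cl2_sq]
    simp_rw [mul_assoc, ← mul_sum]
    rfl
  have hsq := h (star w) v
  rw [hw, cl2_star, Complex.norm_real, Real.norm_of_nonneg (by positivity), sq, mul_assoc]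
    at hsq
  rcases (cl2_nonneg w).eq_or_lt with h0 | h0
  · rw [← h0]
    exact mul_nonneg hP (cl2_nonneg v)
  · nlinarith

lemma singvals_eq_cl2_mulVec [DecidableEq n] (X : Matrix n n ℂ) (i : n) :
    singvals X i = cl2 (X *ᵥ (isHermitian_conjTranspose_mul_self X).eigenvectorBasis i) := by
  rw [singvals, (isHermitian_conjTranspose_mul_self X).eigenvalues_eq, ← mulVec_mulVec,
    dotProduct_mulVec, ← star_mulVec, star_dotProduct_self_eq_cl2_sq, RCLike.re_to_complex,
    Complex.ofReal_re, Real.sqrt_sq (cl2_nonneg _)]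

lemma specNorm_nonneg {𝕜 : Type*} [RCLike 𝕜] [DecidableEq n] (X : Matrix n n 𝕜) :
    0 ≤ specNorm X :=
  Real.iSup_nonneg fun _ => Real.sqrt_nonneg _

theorem specNorm_le_of_cl2_mulVec_le [DecidableEq n] (X : Matrix n n ℂ) {P : ℝ} (hP : 0 ≤ P)
    (h : ∀ v, cl2 (X *ᵥ v) ≤ P * cl2 v) : specNorm X ≤ P := by
  refine Real.iSup_le (fun i => ?_) hP
  rw [singvals_eq_cl2_mulVec]
  refine (h _).trans_eq ?_
  rw [cl2_euclideanSpace,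
    (isHermitian_conjTranspose_mul_self X).eigenvectorBasis.orthonormal.1 i, mul_one]

end SpectralNorm

section Hankel

lemma Gmap_eq_hankelMat {N : ℕ} (x : Fin (2 * N - 1) → ℂ) :
    Gmap x = hankelMat fun j => x j / (Real.sqrt (Kval N j) : ℂ) := rfl

variable {N : ℕ} [NeZero (2 * N - 1)]

theorem specNorm_hankelMat_le (y : Fin (2 * N - 1) → ℂ) {P : ℝ}
    (hP : ∀ ψ : AddChar (Fin (2 * N - 1)) ℂ, ‖∑ a, y a * ψ a‖ ≤ P) :
    specNorm (hankelMat y) ≤ P := by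
  have hN : N ≤ 2 * N - 1 := by
    have := NeZero.ne (2 * N - 1)
    omega
  have hP0 : 0 ≤ P := (norm_nonneg _).trans (hP 0)
  have hentry : ∀ k l : Fin N,
      hankelMat y k l = y (Fin.castLEEmb hN k + Fin.castLEEmb hN l) := fun k l => by
    have := k.2
    have := l.2
    simp only [hankelMat]
    congr 1
    ext
    simp [Fin.val_add, Nat.mod_eq_of_lt (show k.1 + l.1 < 2 * N - 1 by omega)]
  refine specNorm_le_of_cl2_mulVec_le _ hP0 (cl2_mulVec_le_of_norm_sum_le _ hP0 fun u v => ?_)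
  simp_rw [hentry]
  exact norm_sum_mul_apply_add_mul_le _ y hP u v

end Hankel

section RealCoefficients

def reCoeffs {m : Type*} (w : m → ℂ) : m ⊕ m → ℝ :=
  Sum.elim (fun j => (w j).re) fun j => -(w j).im

lemma sum_reCoeffs_sq {m : Type*} [Fintype m] (w : m → ℂ) :
    ∑ i, reCoeffs w i ^ 2 = ∑ j, ‖w j‖ ^ 2 := by
  simp only [Fintype.sum_sum_type, reCoeffs, Sum.elim_inl, Sum.elim_inr, ← sum_add_distrib]
  exact sum_congr rfl fun j _ => by rw [Complex.sq_norm, Complex.normSq_apply]; ring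

lemma re_sum_mul_toComplexVec {N : ℕ} (w : Fin (2 * N - 1) → ℂ)
    (ξ : Fin (2 * N - 1) ⊕ Fin (2 * N - 1) → ℝ) :
    (∑ j, w j * toComplexVec ξ j).re = ∑ i, reCoeffs w i * ξ i := by
  simp only [Complex.re_sum, Fintype.sum_sum_type, reCoeffs, Sum.elim_inl, Sum.elim_inr,
    ← sum_add_distrib, Complex.mul_re, toComplexVec]
  exact sum_congr rfl fun j _ => by ring

lemma norm_le_two_mul_sup'_re_I_pow_mul (z : ℂ) :
    ‖z‖ ≤ 2 * univ.sup' univ_nonempty fun k : Fin 4 => (Complex.I ^ (k : ℕ) * z).re := by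
  set S := univ.sup' univ_nonempty fun k : Fin 4 => (Complex.I ^ (k : ℕ) * z).re
  have h : ∀ k : Fin 4, (Complex.I ^ (k : ℕ) * z).re ≤ S := fun k =>
    le_sup' (fun k : Fin 4 => (Complex.I ^ (k : ℕ) * z).re) (mem_univ k)
  have h0 : z.re ≤ S := by simpa using h 0
  have h1 : -z.im ≤ S := by simpa [Complex.mul_re] using h 1
  have h2 : -z.re ≤ S := by simpa [Complex.mul_re] using h 2
  have h3 : z.im ≤ S := by simpa [pow_succ, Complex.mul_re] using h 3
  have hz := Complex.norm_le_abs_re_add_abs_im z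
  rcases abs_cases z.re with ⟨hr, -⟩ | ⟨hr, -⟩ <;>
    rcases abs_cases z.im with ⟨hi, -⟩ | ⟨hi, -⟩ <;> linarith

end RealCoefficients

section RandomHankel

/-- `∑ i, hankelCoeffs N (ψ, k) i * ξ i = Re (iᵏ * ∑ j, ψ j * x j / √K_j)` for
`x = toComplexVec ξ`. -/
def hankelCoeffs (N : ℕ) [NeZero (2 * N - 1)] (q : AddChar (Fin (2 * N - 1)) ℂ × Fin 4) :
    Fin (2 * N - 1) ⊕ Fin (2 * N - 1) → ℝ :=
  reCoeffs fun j => Complex.I ^ (q.2 : ℕ) * q.1 j / (Real.sqrt (Kval N j) : ℂ)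

variable {N : ℕ} [NeZero (2 * N - 1)]

lemma sum_hankelCoeffs_sq (q : AddChar (Fin (2 * N - 1)) ℂ × Fin 4) :
    ∑ i, hankelCoeffs N q i ^ 2 = ∑ j : Fin (2 * N - 1), ((Kval N j : ℝ))⁻¹ := by
  rw [hankelCoeffs, sum_reCoeffs_sq]
  refine sum_congr rfl fun j _ => ?_
  rw [norm_div, norm_mul, norm_pow, Complex.norm_I, AddChar.norm_apply, Complex.norm_real,
    Real.norm_of_nonneg (Real.sqrt_nonneg _), one_pow, one_mul, one_div, inv_pow,
    Real.sq_sqrt (Nat.cast_nonneg _)]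

lemma specNorm_Gmap_toComplexVec_le (ξ : Fin (2 * N - 1) ⊕ Fin (2 * N - 1) → ℝ) :
    specNorm (Gmap (toComplexVec ξ)) ≤
      2 * univ.sup' univ_nonempty fun q => ∑ i, hankelCoeffs N q i * ξ i := by
  rw [Gmap_eq_hankelMat]
  refine specNorm_hankelMat_le _ fun ψ => (norm_le_two_mul_sup'_re_I_pow_mul _).trans ?_
  gcongr
  refine sup'_le _ _ fun k _ => le_sup'_of_le _ (mem_univ (ψ, k)) (le_of_eq ?_)
  rw [hankelCoeffs, ← re_sum_mul_toComplexVec, mul_sum]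
  exact congrArg Complex.re (sum_congr rfl fun j _ => by ring)

end RandomHankel

lemma sum_inv_Kval_le (N : ℕ) :
    ∑ j : Fin (2 * N - 1), ((Kval N j : ℝ))⁻¹ ≤ 2 * (1 + log (2 * N - 1 : ℕ)) := by
  set M := 2 * N - 1
  have hK : ∀ j ∈ range M,
      ((Kval N j : ℝ))⁻¹ ≤ ((j + 1 : ℕ) : ℝ)⁻¹ + ((M - 1 - j + 1 : ℕ) : ℝ)⁻¹ := by
    intro j hj
    have hj := mem_range.mp hj
    rw [Kval]
    rcases le_total (j + 1) (2 * N - 1 - j) with h | h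
    · rw [min_eq_left h]
      have : (0 : ℝ) ≤ ((M - 1 - j + 1 : ℕ) : ℝ)⁻¹ := by positivity
      linarith
    · rw [min_eq_right h, show 2 * N - 1 - j = M - 1 - j + 1 by omega]
      have : (0 : ℝ) ≤ ((j + 1 : ℕ) : ℝ)⁻¹ := by positivity
      linarith
  have hH : ∑ j ∈ range M, ((j + 1 : ℕ) : ℝ)⁻¹ = harmonic M := by
    simp [harmonic]
  calc ∑ j : Fin M, ((Kval N j : ℝ))⁻¹ = ∑ j ∈ range M, ((Kval N j : ℝ))⁻¹ :=
        Fin.sum_univ_eq_sum_range (fun j => ((Kval N j : ℝ))⁻¹) M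
    _ ≤ ∑ j ∈ range M, (((j + 1 : ℕ) : ℝ)⁻¹ + ((M - 1 - j + 1 : ℕ) : ℝ)⁻¹) := sum_le_sum hK
    _ = 2 * harmonic M := by
        rw [sum_add_distrib, sum_range_reflect (fun j => ((j + 1 : ℕ) : ℝ)⁻¹) M, hH]
        ring
    _ ≤ 2 * (1 + log M) := by
        gcongr
        exact harmonic_le_one_add_log M

lemma two_mul_log_mul_four_add_le {N : ℝ} (hN : 2 ≤ N) :
    2 * log ((2 * N - 1) * 4) + 2 * (1 + log (2 * N - 1)) ≤ 15 * log N := by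
  have hpos : 0 < 2 * N - 1 := by linarith
  have h4 : log ((2 * N - 1) * 4) ≤ 4 * log N :=
    calc log ((2 * N - 1) * 4) ≤ log (N ^ 4) :=
        log_le_log (by positivity) (by nlinarith [pow_le_pow_left₀ zero_le_two hN 3])
      _ = 4 * log N := by simp [log_pow]
  have h2 : log (2 * N - 1) ≤ 2 * log N :=
    calc log (2 * N - 1) ≤ log (N ^ 2) := log_le_log hpos (by nlinarith)
      _ = 2 * log N := by simp [log_pow]
  have hlogN : 2 / 3 < log N := by
    have := log_two_gt_d9
    have := log_le_log two_pos hN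
    linarith
  linarith

/-- the expected spectral norm of the complex random Hankel matrix `G g`,
`g` complex standard Gaussian in `ℂ^{2N-1}`, is at most `C ln N`. -/
theorem stmt_13 :
    ∃ C : ℝ, 0 < C ∧ ∀ N : ℕ, 2 ≤ N →
      (∫ ξ, specNorm (Gmap (toComplexVec ξ))
          ∂(Measure.pi fun _ : Fin (2 * N - 1) ⊕ Fin (2 * N - 1) => gaussianReal 0 1)) ≤
        C * Real.log N := by
  refine ⟨15, by norm_num, fun N hN => ?_⟩
  have : NeZero (2 * N - 1) := ⟨by omega⟩
  have hmax := integral_sup'_linear_gaussianPi_le (hankelCoeffs N) fun q =>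
    (sum_hankelCoeffs_sq q).trans_le (sum_inv_Kval_le N)
  have hcard : Fintype.card (AddChar (Fin (2 * N - 1)) ℂ × Fin 4) = (2 * N - 1) * 4 := by
    simp
  have hM : ((2 * N - 1 : ℕ) : ℝ) = 2 * N - 1 := by
    push_cast [show 1 ≤ 2 * N by omega]
    ring
  rw [hcard, Nat.cast_mul, hM] at hmax
  calc _ ≤ ∫ ξ, 2 * univ.sup' univ_nonempty (fun q => ∑ i, hankelCoeffs N q i * ξ i)
          ∂(Measure.pi fun _ : Fin (2 * N - 1) ⊕ Fin (2 * N - 1) => gaussianReal 0 1) :=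
        integral_mono_of_nonneg (ae_of_all _ fun _ => specNorm_nonneg _)
          ((integrable_sup'_linear_gaussianPi _).const_mul 2)
          (ae_of_all _ specNorm_Gmap_toComplexVec_le)
    _ ≤ 2 * log ((2 * N - 1) * 4) + 2 * (1 + log (2 * N - 1)) := by
        rw [integral_const_mul]
        push_cast at hmax
        linarith
    _ ≤ 15 * log N := two_mul_log_mul_four_add_le (by exact_mod_cast hN)

end
end

section
/- Let N ≥ 1, R ≥ 1, and let x̂ ∈ ℂ^{2N-1} satisfy x̂_j = Σ_{k=1}^R c_k z_k^j for j = 0,…,2N-2, with c_k, z_k ∈ ℂ. Then the N×N Hankel matrix H(x̂) has rank at most R. Moreover, if R ≤ N, the z_k are pairwise distinct, and all c_k ≠ 0, then rank H(x̂) = R; indeed H(x̂) admits the Vandermonde factorization H(x̂) = V · diag(c₁,…,c_R) · Vᵀ, where V ∈ ℂ^{N×R} has entries V_{jk} = z_k^j for 0 ≤ j ≤ N-1, 1 ≤ k ≤ R. -/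
open MeasureTheory ProbabilityTheory Matrix

noncomputable section

namespace Matrix

def vandermondeCols {α : Type*} [Monoid α] (N : ℕ) {R : ℕ} (z : Fin R → α) :
    Matrix (Fin N) (Fin R) α :=
  of fun j k => z k ^ (j : ℕ)

section CommSemiring

variable {α : Type*} [CommSemiring α] {R : ℕ} (c z : Fin R → α)

theorem vandermondeCols_mul_diagonal_mul_transpose_apply (N : ℕ) (i j : Fin N) :
    (vandermondeCols N z * diagonal c * (vandermondeCols N z)ᵀ) i j =
      ∑ k, c k * z k ^ ((i : ℕ) + j) := by
  simp only [mul_apply, diagonal_apply, mul_ite, mul_zero, Finset.sum_ite_eq',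
    Finset.mem_univ, if_true, transpose_apply, vandermondeCols, of_apply, pow_add]
  exact Finset.sum_congr rfl fun k _ => by ring

theorem vandermondeCols_mul_diagonal_mul_transpose_submatrix_castLE {M N : ℕ} (h : M ≤ N) :
    (vandermondeCols N z * diagonal c * (vandermondeCols N z)ᵀ).submatrix
        (Fin.castLE h) (Fin.castLE h) =
      vandermondeCols M z * diagonal c * (vandermondeCols M z)ᵀ := by
  ext i j
  simp only [submatrix_apply, vandermondeCols_mul_diagonal_mul_transpose_apply, Fin.val_castLE]

end CommSemiring

section Field

variable {K : Type*} [Field K] {R : ℕ} (c z : Fin R → K)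

theorem rank_vandermondeCols_mul_diagonal_mul_transpose_le (N : ℕ) :
    (vandermondeCols N z * diagonal c * (vandermondeCols N z)ᵀ).rank ≤ R :=
  calc _ ≤ (vandermondeCols N z).rank := (rank_mul_le_left _ _).trans (rank_mul_le_left _ _)
    _ ≤ R := rank_le_width _

theorem det_vandermondeCols_mul_diagonal_mul_transpose_ne_zero (hz : Function.Injective z)
    (hc : ∀ k, c k ≠ 0) :
    (vandermondeCols R z * diagonal c * (vandermondeCols R z)ᵀ).det ≠ 0 := by
  have hV : (vandermondeCols R z).det ≠ 0 := by
    rw [← det_transpose]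
    exact det_vandermonde_ne_zero_iff.mpr hz
  rw [det_mul, det_mul, det_transpose, det_diagonal]
  exact mul_ne_zero (mul_ne_zero hV (Finset.prod_ne_zero_iff.mpr fun k _ => hc k)) hV

/-- The leading `R × R` block is invertible, so the rank bound is attained. -/
theorem rank_vandermondeCols_mul_diagonal_mul_transpose {N : ℕ} (hRN : R ≤ N)
    (hz : Function.Injective z) (hc : ∀ k, c k ≠ 0) :
    (vandermondeCols N z * diagonal c * (vandermondeCols N z)ᵀ).rank = R := by
  refine le_antisymm (rank_vandermondeCols_mul_diagonal_mul_transpose_le c z N) ?_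
  have hblock := det_vandermondeCols_mul_diagonal_mul_transpose_ne_zero c z hz hc
  calc R = (vandermondeCols R z * diagonal c * (vandermondeCols R z)ᵀ).rank := by
        rw [rank_of_isUnit _ ((isUnit_iff_isUnit_det _).mpr hblock.isUnit), Fintype.card_fin]
    _ ≤ _ := by
        rw [← vandermondeCols_mul_diagonal_mul_transpose_submatrix_castLE c z hRN]
        exact rank_submatrix_le _ _ _

end Field

end Matrix

theorem hankelMat_eq_vandermondeCols_mul_diagonal_mul_transpose {N R : ℕ} (c z : Fin R → ℂ)
    (x : Fin (2 * N - 1) → ℂ) (hx : ∀ j : Fin (2 * N - 1), x j = ∑ k, c k * z k ^ (j : ℕ)) :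
    hankelMat x = vandermondeCols N z * diagonal c * (vandermondeCols N z)ᵀ := by
  ext i j
  rw [vandermondeCols_mul_diagonal_mul_transpose_apply, hankelMat, hx]

theorem stmt_14_general (N R : ℕ)
    (c z : Fin R → ℂ) (xhat : Fin (2 * N - 1) → ℂ)
    (hx : ∀ j : Fin (2 * N - 1), xhat j = ∑ k, c k * z k ^ (j : ℕ)) :
    (hankelMat xhat).rank ≤ R ∧
    (R ≤ N → Function.Injective z → (∀ k, c k ≠ 0) →
      (hankelMat xhat).rank = R ∧
      hankelMat xhat =
        (Matrix.of fun (j : Fin N) (k : Fin R) => z k ^ (j : ℕ)) * Matrix.diagonal c *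
          (Matrix.of fun (j : Fin N) (k : Fin R) => z k ^ (j : ℕ))ᵀ) := by
  rw [hankelMat_eq_vandermondeCols_mul_diagonal_mul_transpose c z xhat hx]
  exact ⟨rank_vandermondeCols_mul_diagonal_mul_transpose_le c z N,
    fun hRN hz hc => ⟨rank_vandermondeCols_mul_diagonal_mul_transpose c z hRN hz hc, rfl⟩⟩

/-- rank and Vandermonde factorization of the Hankel matrix of a
superposition of `R` complex exponentials. -/
theorem stmt_14 (N R : ℕ) (hN : 1 ≤ N) (hR : 1 ≤ R)
    (c z : Fin R → ℂ) (xhat : Fin (2 * N - 1) → ℂ)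
    (hx : ∀ j : Fin (2 * N - 1), xhat j = ∑ k, c k * z k ^ (j : ℕ)) :
    (hankelMat xhat).rank ≤ R ∧
    (R ≤ N → Function.Injective z → (∀ k, c k ≠ 0) →
      (hankelMat xhat).rank = R ∧
      hankelMat xhat =
        (Matrix.of fun (j : Fin N) (k : Fin R) => z k ^ (j : ℕ)) * Matrix.diagonal c *
          (Matrix.of fun (j : Fin N) (k : Fin R) => z k ^ (j : ℕ))ᵀ) :=
  stmt_14_general N R c z xhat hx

end
end
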